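/- The constant function θ ≡ 1/2 satisfies the constrained stationarity condition for the half-graph: ∫₀¹ θ = 1/2 and ∫₀¹ W(x,y)(1 − 2θ(y)) dy = 0 for all x ∈ [0,1], where W is the half-graph graphon; but θ ≡ 1/2 is not a minimizer of J(θ) = 8 ∫_{1/2}^1 ∫₀^{x−1/2} [θ(x)(1−θ(y)) + θ(y)(1−θ(x))] dy dx over H = {θ : [0,1]→[0,1] measurable, ∫θ = 1/2}: the spin function θ* = 1 on [0,1/6)∪[1/2,5/6), θ* = 0 elsewhere, lies in H and satisfies J(θ*) < J(1/2). -/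

import Mathlib

/-!
Expanding the inner integrand of `J` as `θ x + (1 - 2 θ x) θ y` leaves only `θ x` and the
primitive `∫_0^{x - 1/2} θ`. For `θ ≡ 1/2` the second term vanishes, which is also the
stationarity condition, and `J(1/2) = 8 ∫_{1/2}^1 (x - 1/2)/2 = 1/2`. For `θ*` the primitive is
`min c (1/6)` on `[0, 1/2]`, the outer integrand becomes the ramp `max (min (x - 2/3) (1/6)) 0`,
and `J(θ*) = 8/24 = 1/3`.
-/

open MeasureTheory Set

/-- The half-graph graphon. -/
noncomputable def Whalf : ℝ → ℝ → ℝ := fun x y =>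
  if y + 1/2 ≤ x ∨ x + 1/2 ≤ y then 1 else 0

/-- The half-graph cut functional. -/
noncomputable def Jhalf (θ : ℝ → ℝ) : ℝ :=
  8 * ∫ x in Set.Icc (1/2 : ℝ) 1, ∫ y in Set.Icc (0:ℝ) (x - 1/2),
      (θ x * (1 - θ y) + θ y * (1 - θ x))

/-- The candidate optimal spin function: `1` on `[0,1/6) ∪ [1/2,5/6)`, `0` elsewhere. -/
noncomputable def thetaStar : ℝ → ℝ :=
  Set.indicator (Set.Ico (0:ℝ) (1/6) ∪ Set.Ico (1/2 : ℝ) (5/6)) (fun _ => (1:ℝ))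

lemma setIntegral_Icc_indicator_Ico_one (a b c d : ℝ) :
    ∫ y in Icc a b, (Ico c d).indicator (fun _ => (1 : ℝ)) y = max (min b d - max a c) 0 := by
  have hae : (Icc a b ∩ Ico c d : Set ℝ) =ᵐ[volume] Ico (max a c) (min b d) := by
    rw [← Ico_inter_Ico]
    exact (Ico_ae_eq_Icc (a := a) (b := b)).symm.inter (ae_eq_refl (Ico c d))
  rw [setIntegral_indicator measurableSet_Ico, setIntegral_const, smul_eq_mul, mul_one,
    measureReal_congr hae, Real.volume_real_Ico]

lemma setIntegral_mul_one_sub_add_mul_one_sub {θ : ℝ → ℝ} {s : Set ℝ} (hθ : IntegrableOn θ s)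
    (hs : volume s ≠ ⊤) (t : ℝ) :
    ∫ y in s, (t * (1 - θ y) + θ y * (1 - t)) =
      t * volume.real s + (1 - 2 * t) * ∫ y in s, θ y := by
  have hconst : IntegrableOn (fun _ => t) s := integrableOn_const hs
  calc ∫ y in s, (t * (1 - θ y) + θ y * (1 - t))
      = ∫ y in s, (t + (1 - 2 * t) * θ y) := by congr 1; ext y; ring
    _ = t * volume.real s + (1 - 2 * t) * ∫ y in s, θ y := by
      rw [integral_add hconst (hθ.const_mul _), setIntegral_const, integral_const_mul,
        smul_eq_mul, mul_comm]

lemma Jhalf_eq_of_locallyIntegrable {θ : ℝ → ℝ} (hθ : LocallyIntegrable θ) :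
    Jhalf θ = 8 * ∫ x in Icc (1/2 : ℝ) 1,
      (θ x * (x - 1/2) + (1 - 2 * θ x) * ∫ y in Icc (0 : ℝ) (x - 1/2), θ y) := by
  rw [Jhalf]
  congr 1
  refine setIntegral_congr_fun measurableSet_Icc fun x hx => ?_
  rw [setIntegral_mul_one_sub_add_mul_one_sub (hθ.integrableOn_isCompact isCompact_Icc)
    measure_Icc_lt_top.ne, Real.volume_real_Icc_of_le (by linarith [hx.1]), sub_zero]

lemma thetaStar_eq_add :
    thetaStar =
      (Ico (0 : ℝ) (1/6)).indicator (fun _ => 1) + (Ico (1/2 : ℝ) (5/6)).indicator (fun _ => 1) := by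
  refine indicator_union_of_disjoint (Set.disjoint_left.2 ?_) _
  rintro y ⟨-, hy⟩ ⟨hy', -⟩
  linarith

lemma integrable_indicator_Ico_one (c d : ℝ) :
    Integrable ((Ico c d).indicator fun _ => (1 : ℝ)) :=
  (integrableOn_const measure_Ico_lt_top.ne).integrable_indicator measurableSet_Ico

lemma integrable_thetaStar : Integrable thetaStar := by
  rw [thetaStar_eq_add]
  exact (integrable_indicator_Ico_one _ _).add (integrable_indicator_Ico_one _ _)

lemma setIntegral_Icc_thetaStar (a b : ℝ) :
    ∫ y in Icc a b, thetaStar y =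
      max (min b (1/6) - max a 0) 0 + max (min b (5/6) - max a (1/2)) 0 := by
  rw [thetaStar_eq_add, integral_add' (integrable_indicator_Ico_one _ _).integrableOn
    (integrable_indicator_Ico_one _ _).integrableOn, setIntegral_Icc_indicator_Ico_one,
    setIntegral_Icc_indicator_Ico_one]

lemma setIntegral_Icc_ramp : ∫ x in Icc (1/2 : ℝ) 1, max (min (x - 2/3) (1/6)) 0 = 1/24 := by
  have hii (a b : ℝ) : IntervalIntegrable (fun x : ℝ => max (min (x - 2/3) (1/6)) 0) volume a b :=
    (by fun_prop : Continuous fun x : ℝ => max (min (x - 2/3) (1/6)) 0).intervalIntegrable a b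
  rw [integral_Icc_eq_integral_Ioc, ← intervalIntegral.integral_of_le (by norm_num),
    ← intervalIntegral.integral_add_adjacent_intervals (hii (1/2) (2/3)) (hii (2/3) 1),
    ← intervalIntegral.integral_add_adjacent_intervals (hii (2/3) (5/6)) (hii (5/6) 1),
    intervalIntegral.integral_congr (a := 1/2) (b := 2/3) (g := fun _ => 0) ?flat,
    intervalIntegral.integral_congr (a := 2/3) (b := 5/6) (g := fun x => x - 2/3) ?rise,
    intervalIntegral.integral_congr (a := 5/6) (b := 1) (g := fun _ => 1/6) ?top]
  · norm_num [intervalIntegral.integral_comp_sub_right fun x => x]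
  all_goals
    intro x hx
    rw [uIcc_of_le (by norm_num)] at hx
    simp only [max_def, min_def]
    split_ifs <;> linarith [hx.1, hx.2]

lemma setIntegral_Icc_zero_thetaStar {c : ℝ} (hc₀ : 0 ≤ c) (hc : c ≤ 1/2) :
    ∫ y in Icc (0 : ℝ) c, thetaStar y = min c (1/6) := by
  rw [setIntegral_Icc_thetaStar, max_self, sub_zero, max_eq_left (le_min hc₀ (by norm_num)),
    max_eq_right (by norm_num : (0 : ℝ) ≤ 1/2), min_eq_left (by linarith : c ≤ 5/6),
    max_eq_right (by linarith : c - 1/2 ≤ 0), add_zero]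

lemma Jhalf_integrand_thetaStar {x : ℝ} (hx : x ∈ Icc (1/2 : ℝ) 1) :
    thetaStar x * (x - 1/2) + (1 - 2 * thetaStar x) * ∫ y in Icc (0 : ℝ) (x - 1/2), thetaStar y
      = max (min (x - 2/3) (1/6)) 0 := by
  obtain ⟨hx₁, hx₂⟩ := hx
  rw [setIntegral_Icc_zero_thetaStar (by linarith) (by linarith)]
  by_cases h : x < 5/6
  · have hθx : thetaStar x = 1 := indicator_of_mem (by exact Or.inr ⟨hx₁, h⟩) _
    rw [hθx]
    simp only [max_def, min_def]
    split_ifs <;> linarith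
  · have hθx : thetaStar x = 0 :=
      indicator_of_notMem (by rintro (⟨-, h'⟩ | ⟨-, h'⟩) <;> linarith) _
    rw [hθx, min_eq_right (by linarith), min_eq_right (by linarith), max_eq_left (by norm_num)]
    ring

lemma Jhalf_thetaStar : Jhalf thetaStar = 1/3 := by
  rw [Jhalf_eq_of_locallyIntegrable integrable_thetaStar.locallyIntegrable,
    setIntegral_congr_fun measurableSet_Icc fun x hx => Jhalf_integrand_thetaStar hx,
    setIntegral_Icc_ramp]
  norm_num

lemma Jhalf_const_half : Jhalf (fun _ => 1/2) = 1/2 := by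
  rw [Jhalf_eq_of_locallyIntegrable (locallyIntegrable_const _), integral_Icc_eq_integral_Ioc,
    ← intervalIntegral.integral_of_le (by norm_num)]
  norm_num [intervalIntegral.integral_comp_sub_right fun x => x]

lemma setIntegral_Icc_zero_one_thetaStar : ∫ x in Icc (0 : ℝ) 1, thetaStar x = 1/2 := by
  rw [setIntegral_Icc_thetaStar]
  norm_num

theorem stmt_17 :
    (∫ _x in Set.Icc (0:ℝ) 1, (1/2 : ℝ)) = 1/2 ∧
    (∀ x ∈ Set.Icc (0:ℝ) 1,
      (∫ y in Set.Icc (0:ℝ) 1, Whalf x y * (1 - 2 * (1/2 : ℝ))) = 0) ∧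
    (Measurable thetaStar ∧ (∀ x, thetaStar x ∈ Set.Icc (0:ℝ) 1) ∧
      (∫ x in Set.Icc (0:ℝ) 1, thetaStar x) = 1/2) ∧
    Jhalf thetaStar < Jhalf (fun _ => (1/2 : ℝ)) := by
  refine ⟨by simp, fun x _ => by norm_num,
    ⟨?_, fun x => ?_, setIntegral_Icc_zero_one_thetaStar⟩, ?_⟩
  · exact measurable_const.indicator (measurableSet_Ico.union measurableSet_Ico)
  · rw [thetaStar, indicator_apply]
    split_ifs <;> norm_num
  · rw [Jhalf_thetaStar, Jhalf_const_half]
    norm_num
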